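/- Orthogonality of adaptive aliasing filters: for n a power of two, a subtree T of T^full_n, and two distinct leaves v, v' of T with filters Ĝ_v, Ĝ_{v'} defined by Ĝ_u(ξ) = 2^{-w_T(u)} Π_{ℓ ∈ Anc(u,T)} (1 + e^{2πi(ξ-f_u)/2^{ℓ+1}}), one has Σ_{ξ∈[n]} Ĝ_v(ξ) · conj(Ĝ_{v'}(ξ)) = 0. -/

import Mathlib

open scoped Classical

noncomputable section

/-- `T` is a subtree of the full FFT binary tree `T^full_n` of depth `m` on the universe
`[n] = [2^m]`: nodes are pairs `(j, f)` of a level `j ≤ m` and a label `f ∈ [2^j]`;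
`T` contains the root `(0, 0)` and is closed under taking parents (the parent of
`(j+1, f)` is `(j, f % 2^j)`; the right child of `(j, g)` is `(j+1, g)` and the left
child is `(j+1, g + 2^j)`). -/
def IsSubtree (m : ℕ) (T : Set (ℕ × ℕ)) : Prop :=
  (0, 0) ∈ T ∧ (∀ j f : ℕ, (j + 1, f) ∈ T → (j, f % 2 ^ j) ∈ T) ∧
    ∀ j f : ℕ, (j, f) ∈ T → j ≤ m ∧ f < 2 ^ j

/-- `(j, f)` is a leaf of `T`: it belongs to `T` and none of its two children does. -/
def IsLeaf (T : Set (ℕ × ℕ)) (j f : ℕ) : Prop :=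
  (j, f) ∈ T ∧ (j + 1, f) ∉ T ∧ (j + 1, f + 2 ^ j) ∉ T

/-- `Anc T j f`: the set of levels `ℓ < j` at which the ancestor `(ℓ, f % 2^ℓ)` of the
node `(j, f)` has two children in `T`.  Its cardinality is the weight `w_T(v)`. -/
def Anc (T : Set (ℕ × ℕ)) (j f : ℕ) : Finset ℕ :=
  (Finset.range j).filter fun ℓ =>
    (ℓ + 1, f % 2 ^ ℓ) ∈ T ∧ (ℓ + 1, f % 2 ^ ℓ + 2 ^ ℓ) ∈ T

/-- The one-dimensional adaptive aliasing `(v, T)`-isolating filter in the Fourier domain: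
`Ĝ_v(ξ) = 2^{-w_T(v)} ⬝ ∏_{ℓ ∈ Anc(v,T)} (1 + e^{2πi(ξ - f)/2^{ℓ+1}})`. -/
def filt (T : Set (ℕ × ℕ)) (j f ξ : ℕ) : ℂ :=
  (2 : ℂ) ^ (-((Anc T j f).card : ℤ)) *
    ∏ ℓ ∈ Anc T j f,
      (1 + Complex.exp (2 * (Real.pi : ℂ) * Complex.I * ((ξ : ℂ) - (f : ℂ)) / 2 ^ (ℓ + 1)))

/-!
Writing `e(x) = exp (2πix)`, each factor of a filter is `1 + ζ ^ 2 ^ (m - 1 - ℓ)` with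
`ζ = e((ξ - f) / 2^m)`, so expanding the product writes `Ĝ_v` as a sum, over `S ⊆ Anc(v, T)`, of
characters `ξ ↦ ω ^ (ξ k_S)` of `ℤ/2^m` whose frequencies `k_S < 2^m` are distinct binary numbers.
Orthogonality of characters keeps only the diagonal `S = S'`, and folding the sum back gives
`2^m ∏_{ℓ ∈ Anc v ∩ Anc v'} (1 + e((f' - f) / 2^{ℓ+1}))` up to normalisation. At the level `ℓ` of
the lowest common ancestor of the two leaves, which has both children in `T`, `f' - f` is an odd
multiple of `2^ℓ`, so that factor is `1 + e(odd / 2) = 0`.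
-/

open Finset Complex ComplexConjugate
open scoped Real

theorem prod_one_add_pow_two_pow (R : Finset ℕ) (z : ℂ) :
    ∏ i ∈ R, (1 + z ^ 2 ^ i) = ∑ S ∈ R.powerset, z ^ ∑ i ∈ S, 2 ^ i := by
  simp only [prod_one_add, prod_pow_eq_pow_sum]

theorem IsPrimitiveRoot.sum_pow_mul_conj_pow {ω : ℂ} {N k k' : ℕ} (hω : IsPrimitiveRoot ω N)
    (hk : k < N) (hk' : k' < N) (c d : ℂ) :
    ∑ ξ ∈ range N, (ω ^ ξ * c) ^ k * conj ((ω ^ ξ * d) ^ k') =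
      if k = k' then N * (c * conj d) ^ k else 0 := by
  have hconj : conj ω * ω = 1 := by
    rw [conj_mul', hω.norm'_eq_one (by omega)]; simp
  set q := ω ^ k * conj ω ^ k'
  have hterm : ∀ ξ, (ω ^ ξ * c) ^ k * conj ((ω ^ ξ * d) ^ k') = q ^ ξ * (c ^ k * conj d ^ k') := by
    intro ξ
    simp only [q, map_pow, map_mul]
    ring
  simp_rw [hterm, ← sum_mul]
  split_ifs with h
  · subst h
    have hq : q = 1 := by simp only [q]; rw [← mul_pow, mul_comm, hconj, one_pow]
    simp [hq, mul_pow]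
  · have hq : q ≠ 1 := by
      intro hq
      refine h (hω.pow_inj hk hk' ?_)
      calc ω ^ k = q * ω ^ k' := by rw [mul_assoc, ← mul_pow, hconj, one_pow, mul_one]
        _ = ω ^ k' := by rw [hq, one_mul]
    have hqN : q ^ N = 1 := by
      rw [mul_pow, ← map_pow, ← map_pow, pow_right_comm ω k, pow_right_comm ω k', hω.pow_eq_one]
      simp
    rw [geom_sum_eq hq, hqN, sub_self, zero_div, zero_mul]

theorem IsPrimitiveRoot.sum_prod_one_add_mul_conj {ω : ℂ} {m : ℕ} (hω : IsPrimitiveRoot ω (2 ^ m))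
    {R R' : Finset ℕ} (hR : R ⊆ range m) (hR' : R' ⊆ range m) (c d : ℂ) :
    ∑ ξ ∈ range (2 ^ m), (∏ i ∈ R, (1 + (ω ^ ξ * c) ^ 2 ^ i)) *
        conj (∏ i ∈ R', (1 + (ω ^ ξ * d) ^ 2 ^ i)) =
      2 ^ m * ∏ i ∈ R ∩ R', (1 + (c * conj d) ^ 2 ^ i) := by
  have hlt : ∀ S ∈ (range m).powerset, ∑ i ∈ S, 2 ^ i < 2 ^ m := fun S hS =>
    Nat.geomSum_lt le_rfl fun i hi => mem_range.1 (mem_powerset.1 hS hi)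
  calc _ = ∑ S ∈ R.powerset, ∑ S' ∈ R'.powerset, ∑ ξ ∈ range (2 ^ m),
        (ω ^ ξ * c) ^ (∑ i ∈ S, 2 ^ i) * conj ((ω ^ ξ * d) ^ ∑ i ∈ S', 2 ^ i) := by
        simp only [prod_one_add_pow_two_pow, map_sum, sum_mul_sum]
        rw [sum_comm]
        exact sum_congr rfl fun _ _ => sum_comm
    _ = ∑ S ∈ R.powerset, ∑ S' ∈ R'.powerset,
        if S = S' then 2 ^ m * (c * conj d) ^ ∑ i ∈ S, 2 ^ i else 0 := by
        refine sum_congr rfl fun S hS => sum_congr rfl fun S' hS' => ?_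
        rw [hω.sum_pow_mul_conj_pow (hlt S (powerset_mono.2 hR hS))
          (hlt S' (powerset_mono.2 hR' hS'))]
        simp only [(Finset.geomSum_injective le_rfl).eq_iff, Nat.cast_pow, Nat.cast_ofNat]
    _ = ∑ S ∈ (R ∩ R').powerset, 2 ^ m * (c * conj d) ^ ∑ i ∈ S, 2 ^ i := by
        simp only [sum_ite_eq, ← sum_filter]
        congr 1
        ext S
        simp only [mem_filter, mem_powerset, subset_inter_iff]
    _ = _ := by rw [← mul_sum, prod_one_add_pow_two_pow]

theorem injOn_reflect_range (m : ℕ) : Set.InjOn (m - 1 - ·) (range m : Set ℕ) :=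
  fun a ha b hb (h : m - 1 - a = m - 1 - b) => by
    simp only [coe_range, Set.mem_Iio] at ha hb; omega

theorem image_reflect_subset_range {m : ℕ} {A : Finset ℕ} (hA : A ⊆ range m) :
    A.image (m - 1 - ·) ⊆ range m :=
  image_subset_iff.2 fun ℓ hℓ => by have := mem_range.1 (hA hℓ); simp only [mem_range]; omega

theorem prod_one_add_exp_div_two_pow {m : ℕ} {A : Finset ℕ} (hA : A ⊆ range m) (x : ℂ) :
    ∏ ℓ ∈ A, (1 + exp (x / 2 ^ (ℓ + 1))) =
      ∏ i ∈ A.image (m - 1 - ·), (1 + exp (x / 2 ^ m) ^ 2 ^ i) := by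
  rw [prod_image ((injOn_reflect_range m).mono (coe_subset.2 hA))]
  refine prod_congr rfl fun ℓ hℓ => ?_
  have hpow : (2 : ℂ) ^ m = 2 ^ (m - 1 - ℓ) * 2 ^ (ℓ + 1) := by
    rw [← pow_add]; congr 1; have := mem_range.1 (hA hℓ); omega
  rw [← exp_nat_mul, hpow]
  push_cast
  field_simp

theorem sum_prod_one_add_exp_mul_conj {m : ℕ} {A A' : Finset ℕ} (hA : A ⊆ range m)
    (hA' : A' ⊆ range m) (a b : ℝ) :
    ∑ ξ ∈ range (2 ^ m), (∏ ℓ ∈ A, (1 + exp (2 * π * I * ((ξ : ℂ) - a) / 2 ^ (ℓ + 1)))) *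
        conj (∏ ℓ ∈ A', (1 + exp (2 * π * I * ((ξ : ℂ) - b) / 2 ^ (ℓ + 1)))) =
      2 ^ m * ∏ ℓ ∈ A ∩ A', (1 + exp (2 * π * I * ((b : ℂ) - a) / 2 ^ (ℓ + 1))) := by
  set ω := exp (2 * π * I / (2 ^ m : ℕ))
  have hω : IsPrimitiveRoot ω (2 ^ m) := isPrimitiveRoot_exp _ (by positivity)
  have hshift : ∀ (ξ : ℕ) (x : ℂ), exp (2 * π * I * ((ξ : ℂ) - x) / 2 ^ m) =
      ω ^ ξ * exp (-(2 * π * I * x) / 2 ^ m) := by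
    intro ξ x
    rw [← exp_nat_mul, ← exp_add]
    congr 1
    push_cast
    ring
  have hconj : exp (-(2 * π * I * a) / 2 ^ m) * conj (exp (-(2 * π * I * b) / 2 ^ m)) =
      exp (2 * π * I * ((b : ℂ) - a) / 2 ^ m) := by
    rw [← exp_conj, ← exp_add]
    congr 1
    simp only [map_div₀, map_neg, map_mul, map_pow, conj_ofReal, conj_I, map_ofNat]
    ring
  simp only [prod_one_add_exp_div_two_pow hA, prod_one_add_exp_div_two_pow hA',
    prod_one_add_exp_div_two_pow (inter_subset_left.trans hA), hshift]
  rw [hω.sum_prod_one_add_mul_conj (image_reflect_subset_range hA)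
    (image_reflect_subset_range hA'), hconj,
    image_inter_of_injOn _ _ ((injOn_reflect_range m).mono (mod_cast union_subset hA hA'))]

theorem one_add_exp_two_pi_I_mul_odd_div (ℓ : ℕ) (t : ℤ) :
    1 + exp (2 * π * I * (2 ^ ℓ * (2 * t + 1)) / 2 ^ (ℓ + 1)) = 0 := by
  have harg : 2 * π * I * (2 ^ ℓ * (2 * t + 1)) / 2 ^ (ℓ + 1) = t * (2 * π * I) + π * I := by
    rw [pow_succ]
    field_simp
  rw [harg, exp_add, exp_int_mul_two_pi_mul_I, exp_pi_mul_I]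
  ring

theorem Nat.mod_two_pow_succ_eq_or (x ℓ : ℕ) :
    x % 2 ^ (ℓ + 1) = x % 2 ^ ℓ ∨ x % 2 ^ (ℓ + 1) = x % 2 ^ ℓ + 2 ^ ℓ := by
  rw [Nat.mod_pow_succ]
  rcases Nat.mod_two_eq_zero_or_one (x / 2 ^ ℓ) with h | h <;> simp [h]

theorem Nat.exists_mod_two_pow_eq_and_ne {x y L : ℕ} (h : x % 2 ^ L ≠ y % 2 ^ L) :
    ∃ ℓ < L, x % 2 ^ ℓ = y % 2 ^ ℓ ∧ x % 2 ^ (ℓ + 1) ≠ y % 2 ^ (ℓ + 1) := by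
  induction L with
  | zero => simp [Nat.mod_one] at h
  | succ L ih =>
    by_cases hL : x % 2 ^ L = y % 2 ^ L
    · exact ⟨L, L.lt_succ_self, hL, h⟩
    · obtain ⟨ℓ, hℓ, hxy⟩ := ih hL
      exact ⟨ℓ, hℓ.trans L.lt_succ_self, hxy⟩

theorem Nat.exists_sub_eq_two_pow_mul_odd {x y ℓ : ℕ} (hlow : x % 2 ^ ℓ = y % 2 ^ ℓ)
    (hhigh : x % 2 ^ (ℓ + 1) ≠ y % 2 ^ (ℓ + 1)) :
    ∃ t : ℤ, (y : ℤ) - x = 2 ^ ℓ * (2 * t + 1) := by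
  rw [Nat.mod_pow_succ, Nat.mod_pow_succ, hlow, Ne, Nat.add_left_cancel_iff,
    Nat.mul_left_cancel_iff (by positivity)] at hhigh
  refine ⟨((y / 2 ^ ℓ : ℕ) - (x / 2 ^ ℓ : ℕ) - 1 : ℤ) / 2, ?_⟩
  have hx : (x : ℤ) = 2 ^ ℓ * (x / 2 ^ ℓ : ℕ) + (x % 2 ^ ℓ : ℕ) := mod_cast (x.div_add_mod _).symm
  have hy : (y : ℤ) = 2 ^ ℓ * (y / 2 ^ ℓ : ℕ) + (y % 2 ^ ℓ : ℕ) := mod_cast (y.div_add_mod _).symm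
  have hodd : 2 * ((((y / 2 ^ ℓ : ℕ) - (x / 2 ^ ℓ : ℕ) - 1 : ℤ)) / 2) + 1 =
      (y / 2 ^ ℓ : ℕ) - (x / 2 ^ ℓ : ℕ) := by omega
  rw [hodd, hx, hy, hlow]
  ring

namespace IsSubtree

variable {m : ℕ} {T : Set (ℕ × ℕ)}

theorem ancestor_mem (hT : IsSubtree m T) {j f ℓ : ℕ} (hv : (j, f) ∈ T) (hℓ : ℓ ≤ j) :
    (ℓ, f % 2 ^ ℓ) ∈ T := by
  obtain ⟨k, rfl⟩ := Nat.exists_eq_add_of_le hℓ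
  induction k generalizing f with
  | zero =>
    rw [Nat.add_zero] at hv
    rwa [Nat.mod_eq_of_lt (hT.2.2 _ _ hv).2]
  | succ k ih =>
    have := ih (hT.2.1 _ _ hv) (by omega)
    rwa [Nat.mod_mod_of_dvd _ (pow_dvd_pow 2 (by omega))] at this

theorem anc_subset_range (hT : IsSubtree m T) {j f : ℕ} (hv : (j, f) ∈ T) :
    Anc T j f ⊆ range m := fun ℓ hℓ => by
  have := (hT.2.2 _ _ hv).1
  simp only [Anc, mem_filter, mem_range] at hℓ ⊢
  omega

theorem eq_of_isLeaf_of_mod_eq (hT : IsSubtree m T) {j f j' f' : ℕ} (hv : IsLeaf T j f)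
    (hv' : (j', f') ∈ T) (hj : j ≤ j') (hf : f % 2 ^ j = f' % 2 ^ j) : (j, f) = (j', f') := by
  rw [Nat.mod_eq_of_lt (hT.2.2 _ _ hv.1).2] at hf
  rcases hj.eq_or_lt with rfl | hj
  · rw [hf, Nat.mod_eq_of_lt (hT.2.2 _ _ hv').2]
  · have hchild := hT.ancestor_mem hv' hj
    rcases Nat.mod_two_pow_succ_eq_or f' j with h | h <;> rw [h, ← hf] at hchild
    exacts [absurd hchild hv.2.1, absurd hchild hv.2.2]

theorem exists_mem_anc_inter (hT : IsSubtree m T) {j f j' f' : ℕ} (hv : IsLeaf T j f)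
    (hv' : IsLeaf T j' f') (hne : (j, f) ≠ (j', f')) :
    ∃ ℓ ∈ Anc T j f ∩ Anc T j' f', ∃ t : ℤ, (f' : ℤ) - f = 2 ^ ℓ * (2 * t + 1) := by
  have hdiff : f % 2 ^ min j j' ≠ f' % 2 ^ min j j' := by
    intro h
    rcases le_total j j' with hj | hj
    · rw [min_eq_left hj] at h
      exact hne (hT.eq_of_isLeaf_of_mod_eq hv hv'.1 hj h)
    · rw [min_eq_right hj] at h
      exact hne (hT.eq_of_isLeaf_of_mod_eq hv' hv.1 hj h.symm).symm
  obtain ⟨ℓ, hℓ, hlow, hhigh⟩ := Nat.exists_mod_two_pow_eq_and_ne hdiff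
  have hchild := hT.ancestor_mem hv.1 (show ℓ + 1 ≤ j by omega)
  have hchild' := hT.ancestor_mem hv'.1 (show ℓ + 1 ≤ j' by omega)
  -- `v` and `v'` pass through different children of their common ancestor `(ℓ, f % 2 ^ ℓ)`.
  have hsplit : (ℓ + 1, f % 2 ^ ℓ) ∈ T ∧ (ℓ + 1, f % 2 ^ ℓ + 2 ^ ℓ) ∈ T := by
    rcases Nat.mod_two_pow_succ_eq_or f ℓ with h | h <;>
      rcases Nat.mod_two_pow_succ_eq_or f' ℓ with h' | h' <;>
      rw [h] at hchild hhigh <;> rw [h', ← hlow] at hchild' hhigh <;> tauto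
  refine ⟨ℓ, mem_inter.2 ⟨?_, ?_⟩, Nat.exists_sub_eq_two_pow_mul_odd hlow hhigh⟩
  · simpa [Anc] using ⟨by omega, hsplit⟩
  · simpa [Anc, ← hlow] using ⟨by omega, hsplit⟩

end IsSubtree

/-- Orthogonality of adaptive aliasing filters: for `n = 2^m` a power of two, a subtree `T`
of `T^full_n` and two distinct leaves `v = (j, f)` and `v' = (j', f')` of `T`,
`∑_{ξ ∈ [n]} Ĝ_v(ξ) ⬝ conj(Ĝ_{v'}(ξ)) = 0`. -/
theorem stmt_6 (m : ℕ) (T : Set (ℕ × ℕ)) (hT : IsSubtree m T) (j f j' f' : ℕ)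
    (hleaf : IsLeaf T j f) (hleaf' : IsLeaf T j' f')
    (hne : (j, f) ≠ (j', f')) :
    ∑ ξ ∈ Finset.range (2 ^ m), filt T j f ξ * (starRingEnd ℂ) (filt T j' f' ξ) = 0 := by
  obtain ⟨ℓ, hℓ, t, ht⟩ := hT.exists_mem_anc_inter hleaf hleaf' hne
  have hfactor : 1 + exp (2 * π * I * ((f' : ℂ) - f) / 2 ^ (ℓ + 1)) = 0 := by
    rw [show (f' : ℂ) - f = 2 ^ ℓ * (2 * t + 1) by exact_mod_cast ht]
    exact one_add_exp_two_pi_I_mul_odd_div ℓ t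
  have horth := sum_prod_one_add_exp_mul_conj (hT.anc_subset_range hleaf.1)
    (hT.anc_subset_range hleaf'.1) f f'
  simp only [ofReal_natCast] at horth
  simp only [filt, map_mul, mul_mul_mul_comm _ (∏ _ ∈ _, _), ← mul_sum]
  rw [horth, prod_eq_zero hℓ hfactor, mul_zero, mul_zero]
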